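/- arXiv:2107.13690 — 2 statements merged into one kernel-verified Lean document; each statement's English description precedes it below -/
import Mathlib

section
/- Let G be an almost simple group. Then the quotient group T(G) = NHol(G)/Hol(G) is cyclic of order 2. -/
/-!
For `π ∈ NHol(G)` the conjugate `N = π λ(G) π⁻¹` is a regular subgroup normalised by `Hol(G)`.
Let `B ≅ Inn(A)` be the monolith of `G`: it lies in every nontrivial normal subgroup and has
trivial centraliser. If `N ∩ λ(G) = 1`, then `N` and `λ(G)` normalise each other and intersect
trivially, so they commute and `N = ρ(G)`; inversion `ι : x ↦ x⁻¹` swaps `λ(G)` and `ρ(G)`,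
hence `ι π ∈ Hol(G)`. Otherwise `N ∩ λ(G)` pulls back to a nontrivial normal subgroup of `G`, so
`λ(B) ≤ N`, and the same argument applied to `π⁻¹ λ(B) π ≤ λ(G)` shows that `π` normalises
`λ(B)`. Then `N` meets the centraliser of `λ(B)`, which contains `ρ(G)`, trivially, so `N`
commutes with `ρ(G)`, `N = λ(G)` and `π ∈ Hol(G)`. As `G` is non-abelian, `ι ∉ Hol(G)`, so
`T(G) = {1, [ι]}`.
-/

/-- The left regular representation `λ : G →* Perm G`, `λ(σ)(x) = σ·x`. -/
def lambda (G : Type*) [Group G] : G →* Equiv.Perm G where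
  toFun σ := Equiv.mulLeft σ
  map_one' := by ext x; simp
  map_mul' σ τ := by ext x; simp [mul_assoc]

/-- The right regular representation `ρ : G →* Perm G`, `ρ(σ)(x) = x·σ⁻¹`. -/
def rho (G : Type*) [Group G] : G →* Equiv.Perm G where
  toFun σ := Equiv.mulRight σ⁻¹
  map_one' := by ext x; simp
  map_mul' σ τ := by ext x; simp [mul_assoc]

/-- The holomorph `Hol(G)`: the normalizer of `λ(G)` in `Perm G`. -/
def Hol (G : Type*) [Group G] : Subgroup (Equiv.Perm G) :=
  Subgroup.normalizer (((lambda G).range : Subgroup (Equiv.Perm G)) : Set (Equiv.Perm G))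

/-- The multiple holomorph `NHol(G)`: the normalizer of `Hol(G)` in `Perm G`. -/
def NHol (G : Type*) [Group G] : Subgroup (Equiv.Perm G) :=
  Subgroup.normalizer ((Hol G : Subgroup (Equiv.Perm G)) : Set (Equiv.Perm G))

instance holNormalInNHol (G : Type*) [Group G] :
    ((Hol G).subgroupOf (NHol G)).Normal :=
  Subgroup.normal_in_normalizer

/-- `T(G) = NHol(G) / Hol(G)`. -/
def THol (G : Type*) [Group G] : Type _ :=
  NHol G ⧸ (Hol G).subgroupOf (NHol G)

noncomputable instance (G : Type*) [Group G] : Group (THol G) :=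
  QuotientGroup.Quotient.group _

open Subgroup ConjAct
open scoped Pointwise

section Conjugation
variable {P : Type*} [Group P]

lemma Subgroup.smul_le_normalizer_smul (a : ConjAct P) {K L : Subgroup P}
    (h : L ≤ normalizer (K : Set P)) :
    a • L ≤ normalizer ((a • K : Subgroup P) : Set P) := by
  rw [pointwise_smul_def, pointwise_smul_def]
  exact (map_mono h).trans (le_normalizer_map _)

lemma Subgroup.smul_normalizer (a : ConjAct P) (K : Subgroup P) :
    a • normalizer (K : Set P) = normalizer ((a • K : Subgroup P) : Set P) := by
  refine le_antisymm (smul_le_normalizer_smul a le_rfl) ?_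
  rw [subset_pointwise_smul_iff]
  simpa using smul_le_normalizer_smul a⁻¹ (le_refl (normalizer ((a • K : Subgroup P) : Set P)))

lemma Subgroup.le_normalizer_of_forall_le_smul {K L : Subgroup P}
    (h : ∀ x ∈ L, K ≤ toConjAct x • K) : L ≤ normalizer (K : Set P) := by
  intro x hx
  rw [← conjAct_pointwise_smul_iff]
  refine le_antisymm ?_ (h x hx)
  rw [pointwise_smul_subset_iff, ← map_inv]
  exact h x⁻¹ (inv_mem hx)

lemma Subgroup.normal_comap_of_range_le_normalizer {Q : Type*} [Group Q] {f : Q →* P}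
    {K : Subgroup P} (h : f.range ≤ normalizer (K : Set P)) : (K.comap f).Normal :=
  ⟨fun m hm g => by
    rw [mem_comap, map_mul, map_mul, map_inv]
    exact (h ⟨g, rfl⟩ _).mp hm⟩

lemma MonoidHom.smul_range_eq_range {Q : Type*} [Group Q] (a : ConjAct P) {f f' : Q →* P}
    (h : ∀ x, a • f x = f' x) : a • f.range = f'.range := by
  ext σ
  rw [mem_smul_pointwise_iff_exists]
  constructor
  · rintro ⟨_, ⟨x, rfl⟩, rfl⟩
    exact ⟨x, (h x).symm⟩
  · rintro ⟨x, rfl⟩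
    exact ⟨_, ⟨x, rfl⟩, h x⟩

lemma Subgroup.normalizer_le_normalizer_centralizer (s : Set P) :
    normalizer s ≤ normalizer (centralizer s : Set P) := by
  have hconj := (normal_subgroupOf_iff (centralizer_le_normalizer s)).mp inferInstance
  intro n hn c
  refine ⟨fun hc => hconj c n hc hn, fun hc => ?_⟩
  simpa [mul_assoc] using hconj _ n⁻¹ hc (inv_mem hn)

lemma Subgroup.le_centralizer_of_disjoint {K L : Subgroup P} (hKL : Disjoint K L)
    (hK : K ≤ normalizer (L : Set P)) (hL : L ≤ normalizer (K : Set P)) :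
    K ≤ centralizer (L : Set P) := by
  intro x hx y hy
  have hxK : y * x * y⁻¹ * x⁻¹ ∈ K := mul_mem ((hL hy x).mp hx) (inv_mem hx)
  have hyL : y * x * y⁻¹ * x⁻¹ ∈ L := by
    simpa only [mul_assoc] using mul_mem hy ((hK hx y⁻¹).mp (inv_mem hy))
  have := disjoint_def.mp hKL hxK hyL
  rwa [mul_inv_eq_one, mul_inv_eq_iff_eq_mul] at this

lemma Subgroup.Normal.not_disjoint_of_centralizer_eq_bot {M B : Subgroup P} (hM : M.Normal)
    (hB : B.Normal) (hBc : centralizer (B : Set P) = ⊥) (hM_ne : M ≠ ⊥) : ¬Disjoint M B :=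
  fun hdisj => hM_ne (eq_bot_iff.mpr (hBc ▸ le_centralizer_of_disjoint hdisj
    (@le_normalizer_of_normal _ _ _ _ hB) (@le_normalizer_of_normal _ _ _ _ hM)))

lemma exists_mul_ne_mul_of_centralizer_eq_bot {B : Subgroup P} (hB : B ≠ ⊥)
    (hBc : centralizer (B : Set P) = ⊥) : ∃ a b : P, a * b ≠ b * a := by
  by_contra! h
  exact hB (eq_bot_iff.mpr (hBc ▸ fun x _ y _ => h y x))

end Conjugation

section RegularRepresentations

variable {G : Type*} [Group G]

@[simp] lemma lambda_apply (g x : G) : lambda G g x = g * x := rfl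

@[simp] lemma rho_apply (g x : G) : rho G g x = x * g⁻¹ := rfl

lemma lambda_injective : Function.Injective (lambda G) := fun g h hgh => by
  simpa using DFunLike.congr_fun hgh 1

lemma commute_lambda_rho (g h : G) : Commute (lambda G g) (rho G h) :=
  Equiv.ext fun x => (mul_assoc g x h⁻¹).symm

lemma centralizer_lambda_range :
    centralizer ((lambda G).range : Set (Equiv.Perm G)) = (rho G).range := by
  refine le_antisymm (fun π hπ => ⟨(π 1)⁻¹, Equiv.ext fun x => ?_⟩) ?_
  · rintro _ ⟨h, rfl⟩ _ ⟨g, rfl⟩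
    exact commute_lambda_rho g h
  · rw [rho_apply, inv_inv]
    simpa using DFunLike.congr_fun (hπ (lambda G x) ⟨x, rfl⟩) 1

lemma centralizer_rho_range :
    centralizer ((rho G).range : Set (Equiv.Perm G)) = (lambda G).range := by
  refine le_antisymm (fun π hπ => ⟨π 1, Equiv.ext fun x => ?_⟩) ?_
  · rintro _ ⟨g, rfl⟩ _ ⟨h, rfl⟩
    exact (commute_lambda_rho g h).symm
  · have := DFunLike.congr_fun (hπ (rho G x⁻¹) ⟨x⁻¹, rfl⟩) 1
    simp only [Equiv.Perm.mul_apply, rho_apply, inv_inv, one_mul] at this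
    exact this

lemma toConjAct_inv_smul_lambda_range :
    toConjAct (Equiv.inv G : Equiv.Perm G) • (lambda G).range = (rho G).range :=
  MonoidHom.smul_range_eq_range _ fun g => Equiv.ext fun x => by
    simp [toConjAct_smul, Equiv.Perm.mul_apply, Equiv.Perm.inv_def]

lemma toConjAct_inv_smul_rho_range :
    toConjAct (Equiv.inv G : Equiv.Perm G) • (rho G).range = (lambda G).range :=
  MonoidHom.smul_range_eq_range _ fun g => Equiv.ext fun x => by
    simp [toConjAct_smul, Equiv.Perm.mul_apply, Equiv.Perm.inv_def]

lemma exists_mem_toConjAct_smul_lambda_range_apply_one (π : Equiv.Perm G) (x : G) :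
    ∃ n ∈ toConjAct π • (lambda G).range, n 1 = x := by
  refine ⟨_, smul_mem_pointwise_smul _ _ _ ⟨π⁻¹ x * (π⁻¹ 1)⁻¹, rfl⟩, ?_⟩
  rw [toConjAct_smul, Equiv.Perm.mul_apply, Equiv.Perm.mul_apply, lambda_apply,
    inv_mul_cancel_right]
  exact π.apply_symm_apply x

lemma toConjAct_smul_lambda_range_eq_rho_range_of_le {π : Equiv.Perm G}
    (hle : toConjAct π • (lambda G).range ≤ (rho G).range) :
    toConjAct π • (lambda G).range = (rho G).range := by
  refine le_antisymm hle ?_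
  rintro _ ⟨g, rfl⟩
  obtain ⟨n, hn, hn1⟩ := exists_mem_toConjAct_smul_lambda_range_apply_one π g⁻¹
  obtain ⟨h, rfl⟩ := hle hn
  simp only [rho_apply, one_mul, inv_inj] at hn1
  rwa [← hn1]

lemma toConjAct_smul_lambda_range_eq_of_le {π : Equiv.Perm G}
    (hle : toConjAct π • (lambda G).range ≤ (lambda G).range) :
    toConjAct π • (lambda G).range = (lambda G).range := by
  refine le_antisymm hle ?_
  rintro _ ⟨g, rfl⟩
  obtain ⟨n, hn, hn1⟩ := exists_mem_toConjAct_smul_lambda_range_apply_one π g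
  obtain ⟨h, rfl⟩ := hle hn
  simp only [lambda_apply, mul_one] at hn1
  rwa [← hn1]

end RegularRepresentations

section Holomorph
variable {G : Type*} [Group G]

lemma lambda_range_le_Hol : (lambda G).range ≤ Hol G := le_normalizer

lemma Hol_eq_normalizer_rho_range : Hol G = normalizer ((rho G).range : Set (Equiv.Perm G)) := by
  rw [Hol]
  refine le_antisymm ?_ ?_
  · simpa only [centralizer_lambda_range] using
      normalizer_le_normalizer_centralizer ((lambda G).range : Set (Equiv.Perm G))
  · simpa only [centralizer_rho_range] using
      normalizer_le_normalizer_centralizer ((rho G).range : Set (Equiv.Perm G))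

lemma rho_range_le_Hol : (rho G).range ≤ Hol G := by
  rw [Hol_eq_normalizer_rho_range]
  exact le_normalizer

lemma inv_mem_NHol : (Equiv.inv G : Equiv.Perm G) ∈ NHol G := by
  rw [NHol, ← conjAct_pointwise_smul_iff, Hol_eq_normalizer_rho_range, smul_normalizer,
    toConjAct_inv_smul_rho_range]
  exact Hol_eq_normalizer_rho_range

lemma inv_notMem_Hol (hG : ∃ a b : G, a * b ≠ b * a) :
    (Equiv.inv G : Equiv.Perm G) ∉ Hol G := by
  intro hι
  obtain ⟨a, b, hab⟩ := hG
  have hrange : (lambda G).range = (rho G).range := by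
    rw [← toConjAct_inv_smul_lambda_range, conjAct_pointwise_smul_eq_self hι]
  have : lambda G a ∈ centralizer ((lambda G).range : Set (Equiv.Perm G)) := by
    rw [centralizer_lambda_range, ← hrange]; exact ⟨a, rfl⟩
  exact hab (lambda_injective (by simpa using (this (lambda G b) ⟨b, rfl⟩).symm))

variable {π : Equiv.Perm G}

lemma toConjAct_smul_lambda_range_le_Hol (hπ : π ∈ NHol G) :
    toConjAct π • (lambda G).range ≤ Hol G :=
  calc toConjAct π • (lambda G).range ≤ toConjAct π • Hol G :=
        pointwise_smul_le_pointwise_smul_iff.mpr lambda_range_le_Hol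
    _ = Hol G := conjAct_pointwise_smul_eq_self hπ

lemma Hol_le_normalizer_toConjAct_smul_lambda_range (hπ : π ∈ NHol G) :
    Hol G ≤ normalizer ((toConjAct π • (lambda G).range : Subgroup _) : Set (Equiv.Perm G)) :=
  (conjAct_pointwise_smul_eq_self hπ).symm.le.trans (smul_le_normalizer_smul _ le_rfl)

lemma inv_mul_mem_Hol_of_disjoint (hπ : π ∈ NHol G)
    (hdisj : Disjoint (toConjAct π • (lambda G).range) (lambda G).range) :
    Equiv.inv G * π ∈ Hol G := by
  have hN : toConjAct π • (lambda G).range = (rho G).range := by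
    refine toConjAct_smul_lambda_range_eq_rho_range_of_le
      (le_trans ?_ centralizer_lambda_range.le)
    exact le_centralizer_of_disjoint hdisj (toConjAct_smul_lambda_range_le_Hol hπ)
      (lambda_range_le_Hol.trans (Hol_le_normalizer_toConjAct_smul_lambda_range hπ))
  rw [Hol, ← conjAct_pointwise_smul_iff, map_mul, mul_smul, hN, toConjAct_inv_smul_rho_range]

end Holomorph

structure Subgroup.IsMonolith {G : Type*} [Group G] (B : Subgroup G) : Prop where
  normal : B.Normal
  ne_bot : B ≠ ⊥
  le_of_normal : ∀ M : Subgroup G, M.Normal → M ≠ ⊥ → B ≤ M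

namespace Subgroup.IsMonolith
variable {G : Type*} [Group G] {B : Subgroup G}

lemma map_lambda_le (hB : B.IsMonolith) {K : Subgroup (Equiv.Perm G)}
    (hK : (lambda G).range ≤ normalizer (K : Set (Equiv.Perm G)))
    (hdisj : ¬Disjoint K (lambda G).range) : B.map (lambda G) ≤ K := by
  rw [map_le_iff_le_comap]
  refine hB.le_of_normal _ (normal_comap_of_range_le_normalizer hK) fun hbot => hdisj ?_
  rw [disjoint_def]
  rintro _ hx ⟨g, rfl⟩
  have : g ∈ K.comap (lambda G) := hx
  rw [hbot, mem_bot] at this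
  rw [this, map_one]

lemma le_smul_map_lambda (hB : B.IsMonolith) {L : Subgroup (Equiv.Perm G)}
    {a : ConjAct (Equiv.Perm G)} (hBL : B.map (lambda G) ≤ L)
    (hL : L ≤ normalizer (B.map (lambda G) : Set (Equiv.Perm G)))
    (ha : a • L = (lambda G).range) : B.map (lambda G) ≤ a • B.map (lambda G) := by
  refine hB.map_lambda_le (ha ▸ smul_le_normalizer_smul a hL) fun hdisj => hB.ne_bot ?_
  have hle : a • B.map (lambda G) ≤ (lambda G).range :=
    ha ▸ pointwise_smul_le_pointwise_smul_iff.mpr hBL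
  have hbot := (smul_eq_iff_eq_inv_smul a).mp (hdisj.eq_bot_of_le hle)
  rw [smul_bot, map_eq_bot_iff_of_injective _ lambda_injective] at hbot
  exact hbot

lemma Hol_le_normalizer_map_lambda (hB : B.IsMonolith) :
    Hol G ≤ normalizer (B.map (lambda G) : Set (Equiv.Perm G)) := by
  have hrange : (lambda G).range ≤ normalizer (B.map (lambda G) : Set (Equiv.Perm G)) := by
    rw [MonoidHom.range_eq_map, ← @normalizer_eq_top _ _ B hB.normal]
    exact le_normalizer_map _
  exact le_normalizer_of_forall_le_smul fun h hh =>
    hB.le_smul_map_lambda (map_le_range _ _) hrange (conjAct_pointwise_smul_eq_self hh)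

end Subgroup.IsMonolith

section Dichotomy
variable {G : Type*} [Group G] {B : Subgroup G} {π : Equiv.Perm G}

lemma disjoint_toConjAct_smul_lambda_range_centralizer (hBc : centralizer (B : Set G) = ⊥)
    (hπB : toConjAct π • B.map (lambda G) ≤ B.map (lambda G)) :
    Disjoint (toConjAct π • (lambda G).range)
      (centralizer (B.map (lambda G) : Set (Equiv.Perm G))) := by
  rw [disjoint_def]
  intro x hx hxC
  obtain ⟨_, ⟨g, rfl⟩, rfl⟩ := (mem_smul_pointwise_iff_exists _ _ _).mp hx
  have hg : g ∈ centralizer (B : Set G) := fun b hb => by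
    have := hxC _ (hπB (smul_mem_pointwise_smul _ _ _ (mem_map_of_mem _ hb)))
    rw [← smul_mul', ← smul_mul', smul_left_cancel_iff, ← map_mul, ← map_mul] at this
    exact lambda_injective this
  rw [hBc, mem_bot] at hg
  rw [hg, map_one, smul_one]

lemma mem_Hol_of_not_disjoint (hB : B.IsMonolith) (hBc : centralizer (B : Set G) = ⊥)
    (hπ : π ∈ NHol G) (hdisj : ¬Disjoint (toConjAct π • (lambda G).range) (lambda G).range) :
    π ∈ Hol G := by
  have hBN : B.map (lambda G) ≤ toConjAct π • (lambda G).range :=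
    hB.map_lambda_le
      (lambda_range_le_Hol.trans (Hol_le_normalizer_toConjAct_smul_lambda_range hπ)) hdisj
  have hπB : toConjAct π • B.map (lambda G) ≤ B.map (lambda G) := by
    rw [pointwise_smul_subset_iff]
    exact hB.le_smul_map_lambda hBN
      ((toConjAct_smul_lambda_range_le_Hol hπ).trans hB.Hol_le_normalizer_map_lambda)
      (inv_smul_smul _ _)
  have hNC := disjoint_toConjAct_smul_lambda_range_centralizer hBc hπB
  have hρC : (rho G).range ≤ centralizer (B.map (lambda G) : Set (Equiv.Perm G)) := by
    rintro _ ⟨h, rfl⟩ _ ⟨b, _, rfl⟩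
    exact commute_lambda_rho b h
  have hN : toConjAct π • (lambda G).range = (lambda G).range := by
    refine toConjAct_smul_lambda_range_eq_of_le (le_trans ?_ centralizer_rho_range.le)
    exact le_centralizer_of_disjoint (hNC.mono_right hρC)
      ((toConjAct_smul_lambda_range_le_Hol hπ).trans Hol_eq_normalizer_rho_range.le)
      (rho_range_le_Hol.trans (Hol_le_normalizer_toConjAct_smul_lambda_range hπ))
  exact conjAct_pointwise_smul_iff.mp hN

lemma mem_Hol_or_inv_mul_mem_Hol (hB : B.IsMonolith) (hBc : centralizer (B : Set G) = ⊥)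
    (hπ : π ∈ NHol G) : π ∈ Hol G ∨ Equiv.inv G * π ∈ Hol G := by
  by_cases hdisj : Disjoint (toConjAct π • (lambda G).range) (lambda G).range
  · exact .inr (inv_mul_mem_Hol_of_disjoint hπ hdisj)
  · exact .inl (mem_Hol_of_not_disjoint hB hBc hπ hdisj)

lemma card_THol_eq_two (hB : B.IsMonolith) (hBc : centralizer (B : Set G) = ⊥) :
    Nat.card (THol G) = 2 := by
  change ((Hol G).subgroupOf (NHol G)).index = 2
  rw [index_eq_two_iff_exists_notMem_and']
  refine ⟨⟨_, inv_mem_NHol⟩, ?_, fun π => ?_⟩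
  · rw [mem_subgroupOf]
    exact inv_notMem_Hol (exists_mul_ne_mul_of_centralizer_eq_bot hB.ne_bot hBc)
  · simpa only [mem_subgroupOf, coe_mul, or_comm] using
      mem_Hol_or_inv_mul_mem_Hol hB hBc π.2

end Dichotomy

section AlmostSimple
variable {A : Type*} [Group A]

lemma IsSimpleGroup.center_eq_bot [IsSimpleGroup A] (hA : ∃ a b : A, a * b ≠ b * a) :
    center A = ⊥ := by
  refine (IsSimpleGroup.eq_bot_or_eq_top_of_normal _ inferInstance).resolve_right fun h => ?_
  obtain ⟨a, b, hab⟩ := hA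
  exact hab (mem_center_iff.mp (h ▸ mem_top b) a)

lemma MulAut.conj_injective_of_center_eq_bot (hA : center A = ⊥) :
    Function.Injective (MulAut.conj : A →* MulAut A) := by
  rw [injective_iff_map_eq_one]
  intro a ha
  have : a ∈ center A := mem_center_iff.mpr fun x => by
    have hx : a * x * a⁻¹ = x := DFunLike.congr_fun ha x
    rwa [mul_inv_eq_iff_eq_mul, eq_comm] at hx
  rwa [hA, mem_bot] at this

lemma MulAut.mul_conj_mul_inv (f : MulAut A) (a : A) :
    f * MulAut.conj a * f⁻¹ = MulAut.conj (f a) := by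
  ext x
  simp

lemma MulAut.normal_conj_range : (MulAut.conj : A →* MulAut A).range.Normal :=
  ⟨fun _ ⟨a, ha⟩ f => ⟨f a, by rw [← ha, mul_conj_mul_inv]⟩⟩

lemma MulAut.centralizer_conj_range_eq_bot (hA : center A = ⊥) :
    centralizer ((MulAut.conj : A →* MulAut A).range : Set (MulAut A)) = ⊥ := by
  refine eq_bot_iff.mpr fun f hf => (mem_bot).mpr (MulEquiv.ext fun a => ?_)
  refine conj_injective_of_center_eq_bot hA ?_
  rw [← mul_conj_mul_inv, ← hf _ ⟨a, rfl⟩, mul_inv_cancel_right]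
  rfl

variable {G : Type*} [Group G] {φ : G →* MulAut A}

lemma centralizer_comap_conj_range_eq_bot (hA : center A = ⊥) (hφ : Function.Injective φ)
    (hInn : (MulAut.conj : A →* MulAut A).range ≤ φ.range) :
    centralizer (((MulAut.conj : A →* MulAut A).range.comap φ : Subgroup G) : Set G) = ⊥ := by
  refine eq_bot_iff.mpr fun g hg => (mem_bot).mpr (hφ ?_)
  rw [map_one, ← mem_bot, ← MulAut.centralizer_conj_range_eq_bot hA]
  rintro _ ⟨a, rfl⟩
  obtain ⟨b, hb⟩ := hInn ⟨a, rfl⟩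
  have hbB : b ∈ (MulAut.conj : A →* MulAut A).range.comap φ := ⟨a, hb.symm⟩
  rw [← hb, ← map_mul, ← map_mul, hg b hbB]

lemma comap_conj_range_le_of_normal [IsSimpleGroup A] (hA : center A = ⊥)
    (hφ : Function.Injective φ) (hInn : (MulAut.conj : A →* MulAut A).range ≤ φ.range)
    {M : Subgroup G} (hM : M.Normal) (hM_ne : M ≠ ⊥) :
    (MulAut.conj : A →* MulAut A).range.comap φ ≤ M := by
  set B := (MulAut.conj : A →* MulAut A).range.comap φ
  have hB : B.Normal := MulAut.normal_conj_range.comap φ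
  have hMB : (M ⊓ B).Normal := @normal_inf_normal _ _ M B hM hB
  have hK : ((M ⊓ B).map φ).comap MulAut.conj = ⊤ := by
    refine (IsSimpleGroup.eq_bot_or_eq_top_of_normal _
      (normal_comap_of_range_le_normalizer ?_)).resolve_left fun hbot => ?_
    · calc (MulAut.conj : A →* MulAut A).range ≤ φ.range := hInn
        _ = (normalizer (M ⊓ B : Subgroup G)).map φ := by
          rw [normalizer_eq_top, ← MonoidHom.range_eq_map]
        _ ≤ _ := le_normalizer_map φ
    · refine hM.not_disjoint_of_centralizer_eq_bot hB
        (centralizer_comap_conj_range_eq_bot hA hφ hInn) hM_ne (disjoint_iff.mpr ?_)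
      refine eq_bot_iff.mpr fun m hm => ?_
      obtain ⟨a, ha⟩ := hm.2
      have haK : a ∈ ((M ⊓ B).map φ).comap MulAut.conj := ⟨m, hm, ha.symm⟩
      rw [hbot, mem_bot] at haK
      rw [haK, map_one, ← map_one φ] at ha
      exact (hφ ha).symm
  calc B ≤ ((M ⊓ B).map φ).comap φ := by
        refine comap_mono ?_
        rw [MonoidHom.range_eq_map, ← hK]
        exact map_comap_le _ _
    _ = M ⊓ B := comap_map_eq_self_of_injective hφ _
    _ ≤ M := inf_le_left

lemma isMonolith_comap_conj_range [IsSimpleGroup A] (hA : center A = ⊥)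
    (hφ : Function.Injective φ) (hInn : (MulAut.conj : A →* MulAut A).range ≤ φ.range) :
    ((MulAut.conj : A →* MulAut A).range.comap φ).IsMonolith where
  normal := MulAut.normal_conj_range.comap φ
  ne_bot hbot := by
    obtain ⟨a, ha⟩ := exists_ne (1 : A)
    obtain ⟨b, hb⟩ := hInn ⟨a, rfl⟩
    have hbB : b ∈ (MulAut.conj : A →* MulAut A).range.comap φ := ⟨a, hb.symm⟩
    rw [hbot, mem_bot] at hbB
    rw [hbB, map_one, ← map_one MulAut.conj] at hb
    exact ha (MulAut.conj_injective_of_center_eq_bot hA hb).symm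
  le_of_normal _ hM hM_ne := comap_conj_range_le_of_normal hA hφ hInn hM hM_ne

end AlmostSimple

/-- If `G` is an almost simple group (i.e. `G` is isomorphic to a
subgroup `H` of `Aut(A)` containing `Inn(A)`, for some non-abelian simple group `A`),
then `T(G) = NHol(G)/Hol(G)` is cyclic of order `2`. -/
theorem T_of_almost_simple_is_cyclic_of_order_two
    (G : Type*) [Group G]
    (A : Type*) [Group A] [IsSimpleGroup A] (hA : ∃ a b : A, a * b ≠ b * a)
    (H : Subgroup (MulAut A)) (hInn : (MulAut.conj : A →* MulAut A).range ≤ H)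
    (e : G ≃* H) :
    IsCyclic (THol G) ∧ Nat.card (THol G) = 2 := by
  let φ : G →* MulAut A := H.subtype.comp e.toMonoidHom
  have hφ : Function.Injective φ := H.subtype_injective.comp e.injective
  have hφInn : (MulAut.conj : A →* MulAut A).range ≤ φ.range := fun f hf =>
    ⟨e.symm ⟨f, hInn hf⟩, by simp [φ]⟩
  have hZ := IsSimpleGroup.center_eq_bot hA
  have hcard : Nat.card (THol G) = 2 :=
    card_THol_eq_two (isMonolith_comap_conj_range hZ hφ hφInn)
      (centralizer_comap_conj_range_eq_bot hZ hφ hφInn)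
  exact ⟨isCyclic_of_prime_card hcard, hcard⟩
end

section
/- In the setup (G centerless, f, h : G → Aut(G) with h(σ) = conj(g(σ))∘f(σ), g a bijection satisfying g(στ) = g(σ)·f(σ)(g(τ)), and N = {ρ(g(σ))∘f(σ) : σ ∈ G} a normal subgroup of Hol(G)), if {f(σ)h(σ) : σ ∈ G} = Inn(G), then g(ker(f)) ⊆ ker(f) and g(ker(h)) ⊆ ker(h). -/
open Function

section

variable {G : Type*} [Group G]

theorem MulAut.conj_injective_of_center_eq_bot_s17 (hZ : Subgroup.center G = ⊥) :
    Injective (MulAut.conj : G →* MulAut G) := by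
  refine (injective_iff_map_eq_one _).mpr fun x hx => ?_
  have hx : x ∈ Subgroup.center G := Subgroup.mem_center_iff.mpr fun y =>
    eq_mul_inv_iff_mul_eq.mp (by simpa using (DFunLike.congr_fun hx y).symm)
  simpa [hZ] using hx

theorem MulAut.conj_aut_apply (φ : MulAut G) (x : G) :
    MulAut.conj (φ x) = φ * MulAut.conj x * φ⁻¹ := by
  ext y
  simp [MulAut.mul_apply]

theorem MulAut.exists_conj_apply_eq (hZ : Subgroup.center G = ⊥) (F : G →* MulAut G)
    (hF : Injective F) (hrange : F.range = (MulAut.conj : G →* MulAut G).range) :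
    ∃ t : MulAut G, ∀ σ, MulAut.conj (t σ) = F σ := by
  let c := MonoidHom.ofInjective (MulAut.conj_injective_of_center_eq_bot_s17 hZ)
  refine ⟨(MonoidHom.ofInjective hF).trans ((MulEquiv.subgroupCongr hrange).trans c.symm),
    fun σ => ?_⟩
  rw [← MonoidHom.ofInjective_apply (MulAut.conj_injective_of_center_eq_bot_s17 hZ)]
  simp [c, MonoidHom.ofInjective_apply]

namespace Subgroup

/-- For normal `K`, the automorphisms acting trivially on `G ⧸ K`. -/
def autFixingRightCosets (K : Subgroup G) : Subgroup (MulAut G) where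
  carrier := {φ | ∀ v, φ v * v⁻¹ ∈ K}
  one_mem' v := by simp
  mul_mem' {φ ψ} hφ hψ v := by
    simpa [mul_assoc] using K.mul_mem (hφ (ψ v)) (hψ v)
  inv_mem' {φ} hφ v := by
    simpa using K.inv_mem (hφ (φ⁻¹ v))

variable {K L : Subgroup G}

theorem conj_mem_autFixingRightCosets [K.Normal] {x : G} (hx : x ∈ K) :
    MulAut.conj x ∈ K.autFixingRightCosets := fun v => by
  simpa [mul_assoc] using K.mul_mem hx (Normal.conj_mem ‹_› _ (K.inv_mem hx) v)

theorem normal_autFixingRightCosets [hK : K.Characteristic] :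
    K.autFixingRightCosets.Normal where
  conj_mem ψ hψ φ v := by
    simpa [MulAut.mul_apply] using characteristic_iff_le_comap.mp hK φ (hψ (φ⁻¹ v))

theorem disjoint_autFixingRightCosets (hKL : Disjoint K L) :
    Disjoint K.autFixingRightCosets L.autFixingRightCosets :=
  disjoint_def.mpr fun hK hL => MulEquiv.ext fun v =>
    mul_inv_eq_one.mp (disjoint_def.mp hKL (hK v) (hL v))

theorem commute_of_mem_autFixingRightCosets [K.Characteristic] [L.Characteristic]
    (hKL : Disjoint K L) {φ ψ : MulAut G} (hφ : φ ∈ K.autFixingRightCosets)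
    (hψ : ψ ∈ L.autFixingRightCosets) : Commute φ ψ :=
  commute_of_normal_of_disjoint _ _ normal_autFixingRightCosets normal_autFixingRightCosets
    (disjoint_autFixingRightCosets hKL) φ ψ hφ hψ

end Subgroup

def IsCrossedHom {M : Type*} [Group M] (f : G →* MulAut M) (g : G → M) : Prop :=
  ∀ σ τ, g (σ * τ) = g σ * f σ (g τ)

namespace IsCrossedHom

variable {M : Type*} [Group M] {f : G →* MulAut M} {g : G → M}

theorem map_one (hg : IsCrossedHom f g) : g 1 = 1 := by
  simpa using hg 1 1

theorem apply_map_inv (hg : IsCrossedHom f g) (σ : G) : f σ (g σ⁻¹) = (g σ)⁻¹ := by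
  have h := hg σ σ⁻¹
  rw [mul_inv_cancel, hg.map_one] at h
  exact eq_inv_of_mul_eq_one_right h.symm

theorem map_mul_inv (hg : IsCrossedHom f g) {σ τ : G} (hστ : f τ = f σ) :
    g (τ * σ⁻¹) = g τ * (g σ)⁻¹ := by
  rw [hg, hστ, hg.apply_map_inv]

def kerImage (hg : IsCrossedHom f g) : Subgroup M where
  carrier := g '' f.ker
  one_mem' := ⟨1, one_mem _, hg.map_one⟩
  mul_mem' := by
    rintro _ _ ⟨α, hα, rfl⟩ ⟨β, hβ, rfl⟩
    exact ⟨α * β, mul_mem hα hβ, by rw [hg, MonoidHom.mem_ker.mp hα, MulAut.one_apply]⟩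
  inv_mem' := by
    rintro _ ⟨α, hα, rfl⟩
    exact ⟨α⁻¹, inv_mem hα, by simpa [MonoidHom.mem_ker.mp hα] using hg.apply_map_inv α⟩

theorem apply_mem_kerImage (hg : IsCrossedHom f g) {σ : G} (hσ : σ ∈ f.ker) :
    g σ ∈ hg.kerImage :=
  ⟨σ, hσ, rfl⟩

theorem mul_inv_mem_kerImage (hg : IsCrossedHom f g) {σ τ : G} (hστ : f τ = f σ) :
    g τ * (g σ)⁻¹ ∈ hg.kerImage :=
  ⟨τ * σ⁻¹, by simp [hστ], hg.map_mul_inv hστ⟩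

end IsCrossedHom

@[simp]
theorem MulAut.toPerm_apply {M : Type*} [Monoid M] (φ : MulAut M) (x : M) :
    MulAut.toPerm M φ x = φ x :=
  rfl

@[simp]
theorem MulAut.toPerm_symm_apply {M : Type*} [Monoid M] (φ : MulAut M) (x : M) :
    (MulAut.toPerm M φ).symm x = φ⁻¹ x :=
  rfl

theorem mem_Hol_of_conj_lambda {q : Equiv.Perm G} (ψ : MulAut G)
    (hq : ∀ a, q * lambda G a * q⁻¹ = lambda G (ψ a)) : q ∈ Hol G := by
  refine Subgroup.mem_set_normalizer_iff.mpr fun p => ⟨?_, ?_⟩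
  · rintro ⟨a, rfl⟩
    exact ⟨ψ a, (hq a).symm⟩
  · rintro ⟨b, hb⟩
    have h := hq (ψ⁻¹ b)
    rw [MulAut.apply_inv_self, hb] at h
    exact ⟨ψ⁻¹ b, mul_left_cancel (mul_right_cancel h)⟩

theorem rho_mem_Hol (v : G) : rho G v ∈ Hol G :=
  mem_Hol_of_conj_lambda 1 fun a => by
    ext x
    simp [rho, lambda, Equiv.Perm.inv_def, mul_assoc]

theorem lambda_mem_Hol (v : G) : lambda G v ∈ Hol G :=
  mem_Hol_of_conj_lambda (MulAut.conj v) fun a => by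
    ext x
    simp [lambda, Equiv.Perm.inv_def, mul_assoc]

theorem toPerm_mem_Hol (φ : MulAut G) : MulAut.toPerm G φ ∈ Hol G :=
  mem_Hol_of_conj_lambda φ fun a => by
    ext x
    simp [lambda, Equiv.Perm.inv_def]

theorem rho_mul_toPerm_inj {a b : G} {α β : MulAut G} :
    rho G a * MulAut.toPerm G α = rho G b * MulAut.toPerm G β ↔ a = b ∧ α = β := by
  refine ⟨fun hab => ?_, by rintro ⟨rfl, rfl⟩; rfl⟩
  have hx : ∀ x, α x * a⁻¹ = β x * b⁻¹ := fun x => by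
    simpa [rho] using DFunLike.congr_fun hab x
  obtain rfl : a = b := by simpa using hx 1
  exact ⟨rfl, MulEquiv.ext fun x => mul_right_cancel (hx x)⟩

theorem rho_conj_rho_mul_toPerm (v a : G) (α : MulAut G) :
    rho G v * (rho G a * MulAut.toPerm G α) * (rho G v)⁻¹
      = rho G (v * a * (α v)⁻¹) * MulAut.toPerm G α := by
  ext x
  simp [rho, Equiv.Perm.inv_def, mul_assoc]

theorem lambda_conj_rho_mul_toPerm (v a : G) (α : MulAut G) :
    lambda G v * (rho G a * MulAut.toPerm G α) * (lambda G v)⁻¹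
      = rho G (a * α v * v⁻¹) * MulAut.toPerm G (MulAut.conj (v * (α v)⁻¹) * α) := by
  ext x
  simp [rho, lambda, Equiv.Perm.inv_def, mul_assoc]

theorem toPerm_conj_rho_mul_toPerm (φ : MulAut G) (a : G) (α : MulAut G) :
    MulAut.toPerm G φ * (rho G a * MulAut.toPerm G α) * (MulAut.toPerm G φ)⁻¹
      = rho G (φ a) * MulAut.toPerm G (φ * α * φ⁻¹) := by
  ext x
  simp [rho, Equiv.Perm.inv_def, MulAut.inv_def]

/-- The last three fields say that `{ρ(g σ) ∘ f σ}` is normalized by `ρ(v)`, `λ(v)` and the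
automorphisms (see `IsHolCocycle.of_normal`); in this form they are symmetric under
`IsHolCocycle.swap`. -/
structure IsHolCocycle (f h : G →* MulAut G) (g : Equiv.Perm G) : Prop where
  isCrossedHom : IsCrossedHom f g
  h_eq : ∀ σ, h σ = MulAut.conj (g σ) * f σ
  exists_rho : ∀ σ v, ∃ τ, f τ = f σ ∧ g τ = v * g σ * (f σ v)⁻¹
  exists_lambda : ∀ σ v, ∃ τ, h τ = h σ ∧ g τ = g σ * f σ v * v⁻¹
  exists_aut : ∀ (φ : MulAut G) σ, ∃ τ, f τ = φ * f σ * φ⁻¹ ∧ g τ = φ (g σ)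

namespace IsHolCocycle

variable {f h : G →* MulAut G} {g : Equiv.Perm G}

theorem of_normal (hg : IsCrossedHom f g) (hh : ∀ σ, h σ = MulAut.conj (g σ) * f σ)
    (hN : ∀ x ∈ Hol G, ∀ σ, ∃ τ, x * (rho G (g σ) * MulAut.toPerm G (f σ)) * x⁻¹
      = rho G (g τ) * MulAut.toPerm G (f τ)) :
    IsHolCocycle f h g := by
  have hconj : ∀ x ∈ Hol G, ∀ σ a α,
      x * (rho G (g σ) * MulAut.toPerm G (f σ)) * x⁻¹ = rho G a * MulAut.toPerm G α →
      ∃ τ, g τ = a ∧ f τ = α := by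
    intro x hx σ a α hσ
    obtain ⟨τ, hτ⟩ := hN x hx σ
    exact ⟨τ, rho_mul_toPerm_inj.mp (hτ.symm.trans hσ)⟩
  refine ⟨hg, hh, fun σ v => ?_, fun σ v => ?_, fun φ σ => ?_⟩
  · obtain ⟨τ, hgτ, hfτ⟩ :=
      hconj _ (rho_mem_Hol v) σ _ _ (rho_conj_rho_mul_toPerm _ _ _)
    exact ⟨τ, hfτ, hgτ⟩
  · obtain ⟨τ, hgτ, hfτ⟩ :=
      hconj _ (lambda_mem_Hol v) σ _ _ (lambda_conj_rho_mul_toPerm _ _ _)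
    refine ⟨τ, ?_, hgτ⟩
    rw [hh, hh, hgτ, hfτ, ← mul_assoc, ← map_mul]
    group
  · obtain ⟨τ, hgτ, hfτ⟩ :=
      hconj _ (toPerm_mem_Hol φ) σ _ _ (toPerm_conj_rho_mul_toPerm _ _ _)
    exact ⟨τ, hfτ, hgτ⟩

theorem h_apply (S : IsHolCocycle f h g) (σ v : G) : h σ v = g σ * f σ v * (g σ)⁻¹ := by
  rw [S.h_eq]
  rfl

theorem swap (S : IsHolCocycle f h g) : IsHolCocycle h f (g.trans (Equiv.inv G)) where
  isCrossedHom σ τ := by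
    simp [S.isCrossedHom σ τ, S.h_apply, mul_assoc]
  h_eq σ := by
    ext v
    simp [S.h_apply, MulAut.mul_apply, mul_assoc]
  exists_rho σ v := by
    obtain ⟨τ, hτ, hgτ⟩ := S.exists_lambda σ v
    exact ⟨τ, hτ, by simp [hgτ, S.h_apply, mul_assoc]⟩
  exists_lambda σ v := by
    obtain ⟨τ, hτ, hgτ⟩ := S.exists_rho σ v
    exact ⟨τ, hτ, by simp [hgτ, S.h_apply, mul_assoc]⟩
  exists_aut φ σ := by
    obtain ⟨τ, hτ, hgτ⟩ := S.exists_aut φ σ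
    refine ⟨τ, ?_, by simp [hgτ]⟩
    rw [S.h_eq, S.h_eq, hτ, hgτ, MulAut.conj_aut_apply]
    group

abbrev kerImage (S : IsHolCocycle f h g) : Subgroup G :=
  S.isCrossedHom.kerImage

theorem characteristic_kerImage (S : IsHolCocycle f h g) :
    S.kerImage.Characteristic := by
  refine Subgroup.characteristic_iff_le_comap.mpr fun φ => ?_
  rintro _ ⟨σ, hσ, rfl⟩
  obtain ⟨τ, hτ, hgτ⟩ := S.exists_aut φ σ
  exact ⟨τ, by simp_all, hgτ⟩

theorem h_mem_autFixingRightCosets (S : IsHolCocycle f h g) (σ : G) :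
    h σ ∈ S.kerImage.autFixingRightCosets := fun v => by
  obtain ⟨τ, hτ, hgτ⟩ := S.exists_rho σ v
  have hK := inv_mem (S.isCrossedHom.mul_inv_mem_kerImage hτ)
  rw [hgτ] at hK
  convert hK using 1
  simp [S.h_apply, mul_assoc]

theorem eq_one_of_mem_ker (S : IsHolCocycle f h g) (hZ : Subgroup.center G = ⊥) {σ : G}
    (hf : f σ = 1) (hh : h σ = 1) : σ = 1 := by
  have hg : g σ = 1 :=
    MulAut.conj_injective_of_center_eq_bot_s17 hZ (by simpa [hf, hh] using (S.h_eq σ).symm)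
  exact g.injective (hg.trans S.isCrossedHom.map_one.symm)

theorem disjoint_kerImage (S : IsHolCocycle f h g) (hZ : Subgroup.center G = ⊥) :
    Disjoint S.kerImage S.swap.kerImage := by
  refine Subgroup.disjoint_def.mpr ?_
  rintro _ ⟨α, hα, rfl⟩ ⟨β, hβ, hβα⟩
  rw [SetLike.mem_coe, MonoidHom.mem_ker] at hα hβ
  -- on `ker h`, `g` commutes with inversion
  have hgβ : g β⁻¹ = g α := by
    simpa [hβ, ← hβα, inv_eq_iff_eq_inv] using S.swap.isCrossedHom.apply_map_inv β
  obtain rfl : β⁻¹ = α := g.injective hgβ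
  rw [S.eq_one_of_mem_ker hZ hα (by simp [hβ]), S.isCrossedHom.map_one]

theorem commute (S : IsHolCocycle f h g) (hZ : Subgroup.center G = ⊥) (σ τ : G) :
    Commute (f σ) (h τ) := by
  have := S.characteristic_kerImage
  have := S.swap.characteristic_kerImage
  exact Subgroup.commute_of_mem_autFixingRightCosets (S.disjoint_kerImage hZ).symm
    (S.swap.h_mem_autFixingRightCosets σ) (S.h_mem_autFixingRightCosets τ)

theorem f_eq_one_of_mem_autFixingRightCosets (S : IsHolCocycle f h g)
    (hZ : Subgroup.center G = ⊥) {σ : G} (hσ : f σ ∈ S.kerImage.autFixingRightCosets) :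
    f σ = 1 :=
  Subgroup.disjoint_def.mp (Subgroup.disjoint_autFixingRightCosets (S.disjoint_kerImage hZ)) hσ
    (S.swap.h_mem_autFixingRightCosets σ)

theorem mem_kerImage_of_conj_mem_autFixingRightCosets (S : IsHolCocycle f h g)
    (hZ : Subgroup.center G = ⊥)
    (hfh : Set.range (fun σ => f σ * h σ)
      = ((MulAut.conj : G →* MulAut G).range : Set (MulAut G)))
    {π : G} (hπ : MulAut.conj π ∈ S.kerImage.autFixingRightCosets) :
    π ∈ S.kerImage := by
  obtain ⟨σ, hσ⟩ : MulAut.conj π ∈ Set.range fun σ => f σ * h σ := hfh ▸ ⟨π, rfl⟩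
  have hf : f σ = 1 := S.f_eq_one_of_mem_autFixingRightCosets hZ <| by
    simpa [← hσ] using mul_mem hπ (inv_mem (S.h_mem_autFixingRightCosets σ))
  have hπσ : π = g σ :=
    MulAut.conj_injective_of_center_eq_bot_s17 hZ (by simp [← hσ, S.h_eq, hf])
  exact hπσ ▸ S.isCrossedHom.apply_mem_kerImage hf

theorem exists_conj_eq_mul (S : IsHolCocycle f h g) (hZ : Subgroup.center G = ⊥)
    (hfh : Set.range (fun σ => f σ * h σ)
      = ((MulAut.conj : G →* MulAut G).range : Set (MulAut G))) :
    ∃ t : MulAut G, ∀ σ, MulAut.conj (t σ) = f σ * h σ := by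
  let F : G →* MulAut G :=
    { toFun σ := f σ * h σ
      map_one' := by simp
      map_mul' σ τ := by
        simp only [map_mul]
        exact (S.commute hZ τ σ).mul_mul_mul_comm _ _ }
  have hF : Injective F := by
    refine (injective_iff_map_eq_one F).mpr fun σ hσ => ?_
    have hf : f σ = 1 := S.f_eq_one_of_mem_autFixingRightCosets hZ <| by
      rw [eq_inv_of_mul_eq_one_left hσ]
      exact inv_mem (S.h_mem_autFixingRightCosets σ)
    exact S.eq_one_of_mem_ker hZ hf (by simpa [F, hf] using hσ)
  exact MulAut.exists_conj_apply_eq hZ F hF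
    (SetLike.coe_injective (by rw [MonoidHom.coe_range]; exact hfh))

theorem kerImage_le_ker (S : IsHolCocycle f h g) (hZ : Subgroup.center G = ⊥)
    (hfh : Set.range (fun σ => f σ * h σ)
      = ((MulAut.conj : G →* MulAut G).range : Set (MulAut G))) :
    S.kerImage ≤ f.ker := by
  have hK := S.characteristic_kerImage
  obtain ⟨t, ht⟩ := S.exists_conj_eq_mul hZ hfh
  intro x hx
  have htx : t x ∈ S.kerImage := Subgroup.characteristic_iff_le_comap.mp hK t hx
  have hgtx : g x * t x ∈ S.kerImage :=
    S.mem_kerImage_of_conj_mem_autFixingRightCosets hZ hfh <| by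
      rw [map_mul, ht, ← mul_assoc, ← S.h_eq]
      exact mul_mem (S.h_mem_autFixingRightCosets x) (S.h_mem_autFixingRightCosets x)
  have hgx : g x ∈ S.kerImage := by simpa using mul_mem hgtx (inv_mem htx)
  refine S.f_eq_one_of_mem_autFixingRightCosets hZ ?_
  have hfx : f x = (MulAut.conj (g x))⁻¹ * h x := by rw [S.h_eq]; group
  rw [hfx]
  exact mul_mem (inv_mem (Subgroup.conj_mem_autFixingRightCosets hgx))
    (S.h_mem_autFixingRightCosets x)

end IsHolCocycle

end

theorem g_preserves_kernels_of_fh_eq_inn_general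
    (G : Type*) [Group G] (hZ : Subgroup.center G = ⊥)
    (f h : G →* MulAut G) (g : Equiv.Perm G)
    (hrel : ∀ σ τ : G, g (σ * τ) = g σ * (f σ) (g τ))
    (hh : ∀ σ : G, h σ = MulAut.conj (g σ) * f σ)
    (N : Subgroup (Equiv.Perm G))
    (hN : (N : Set (Equiv.Perm G))
      = {q | ∃ σ : G, q = rho G (g σ) * MulAut.toPerm G (f σ)})
    (hNnorm : ∀ x ∈ Hol G, ∀ n ∈ N, x * n * x⁻¹ ∈ N)
    (hfh : Set.range (fun σ : G => f σ * h σ)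
      = ((MulAut.conj : G →* MulAut G).range : Set (MulAut G)))
    :
    ⇑g '' (f.ker : Set G) ⊆ (f.ker : Set G) ∧
      ⇑g '' (h.ker : Set G) ⊆ (h.ker : Set G) := by
  have hmemN : ∀ q, q ∈ N ↔ ∃ σ, q = rho G (g σ) * MulAut.toPerm G (f σ) :=
    Set.ext_iff.mp hN
  have S : IsHolCocycle f h g := .of_normal hrel hh fun x hx σ => by
    obtain ⟨τ, hτ⟩ := (hmemN _).mp (hNnorm x hx _ ((hmemN _).mpr ⟨σ, rfl⟩))
    exact ⟨τ, hτ⟩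
  have hhf : Set.range (fun σ => h σ * f σ) = Set.range (fun σ => f σ * h σ) :=
    congrArg Set.range (funext fun σ => (S.commute hZ σ σ).eq.symm)
  refine ⟨fun _ hx => S.kerImage_le_ker hZ hfh hx, ?_⟩
  rintro _ ⟨σ, hσ, rfl⟩
  simpa using S.swap.kerImage_le_ker hZ (hhf.trans hfh) (S.swap.isCrossedHom.apply_mem_kerImage hσ)

/-- In the setup, if `{f(σ)h(σ) : σ ∈ G} = Inn(G)`, then
`g(ker f) ⊆ ker f` and `g(ker h) ⊆ ker h`. -/
theorem g_preserves_kernels_of_fh_eq_inn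
    (G : Type*) [Group G] (hZ : Subgroup.center G = ⊥)
    (f h : G →* MulAut G) (g : Equiv.Perm G) (hg1 : g 1 = 1)
    (hrel : ∀ σ τ : G, g (σ * τ) = g σ * (f σ) (g τ))
    (hh : ∀ σ : G, h σ = MulAut.conj (g σ) * f σ)
    (N : Subgroup (Equiv.Perm G))
    (hN : (N : Set (Equiv.Perm G))
      = {q | ∃ σ : G, q = rho G (g σ) * MulAut.toPerm G (f σ)})
    (hNle : N ≤ Hol G)
    (hNnorm : ∀ x ∈ Hol G, ∀ n ∈ N, x * n * x⁻¹ ∈ N)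
    (hfh : Set.range (fun σ : G => f σ * h σ)
      = ((MulAut.conj : G →* MulAut G).range : Set (MulAut G)))
    :
    ⇑g '' (f.ker : Set G) ⊆ (f.ker : Set G) ∧
      ⇑g '' (h.ker : Set G) ⊆ (h.ker : Set G) :=
  g_preserves_kernels_of_fh_eq_inn_general G hZ f h g hrel hh N hN hNnorm hfh
end
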